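/- In the class of all groups, the generator distance between the Klein four-group V_4 = (ℤ/2ℤ) × (ℤ/2ℤ) and the quaternion group Q_8 equals 2. -/

import Mathlib

/-!
A large embedding is in particular an embedding, so a path of length at most one between `V₄`
and `Q₈` would give an isomorphism or an injective homomorphism between them. Cardinality rules
out all of these except `V₄ ↪ Q₈`, and that one fails because `Q₈` has only two solutions of
`x ^ 2 = 1`. A path of length two goes through the semidihedral group
`SD₁₆ = ⟨r, s | r⁸ = s² = 1, srs⁻¹ = r³⟩`: it contains `V₄ = ⟨r⁴, s⟩` and `Q₈ = ⟨r², rs⟩`, and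
each of them generates `SD₁₆` together with one further element (`r`, respectively `s`).
-/

open CategoryTheory

namespace GrpNetwork

/-- `A` is largely embeddable into `B` in the class of all groups: `B` has a subgroup
`H` isomorphic to `A` such that `H` together with one extra element generates `B`. -/
def LargeEmb (A B : GrpCat.{0}) : Prop :=
  ∃ H : Subgroup B, Nonempty (A ≃* H) ∧ ∃ b : B, Subgroup.closure (↑H ∪ {b}) = ⊤

/-- A path of length `n` between `A` and `B` in the network of large embeddings of
the class of all groups. -/
def HasPath (A B : GrpCat.{0}) (n : ℕ) : Prop :=
  ∃ C : ℕ → GrpCat.{0}, Nonempty ((C 0) ≃* A) ∧ Nonempty ((C n) ≃* B) ∧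
    ∀ i < n, LargeEmb (C i) (C (i + 1)) ∨ LargeEmb (C (i + 1)) (C i)

/-- The generator distance in the class of all groups, in `ℕ ∪ {∞}`. -/
noncomputable def dis (A B : GrpCat.{0}) : ℕ∞ :=
  sInf {q : ℕ∞ | ∃ n : ℕ, q = (n : ℕ∞) ∧ HasPath A B n}

end GrpNetwork

namespace GrpNetwork

variable {A B : GrpCat.{0}}

lemma LargeEmb.exists_injective (h : LargeEmb A B) : ∃ f : A →* B, Function.Injective f := by
  obtain ⟨H, ⟨e⟩, -⟩ := h
  exact ⟨H.subtype.comp e.toMonoidHom, H.subtype_injective.comp e.injective⟩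

lemma largeEmb_of_injective {G H : Type} [Group G] [Group H] {f : G →* H}
    (hf : Function.Injective f) (h : H) (hclosure : Subgroup.closure (↑f.range ∪ {h}) = ⊤) :
    LargeEmb (GrpCat.of G) (GrpCat.of H) :=
  ⟨f.range, ⟨MonoidHom.ofInjective hf⟩, h, hclosure⟩

lemma HasPath.nonempty_mulEquiv (h : HasPath A B 0) : Nonempty (A ≃* B) := by
  obtain ⟨C, ⟨e₀⟩, ⟨e₁⟩, -⟩ := h
  exact ⟨e₀.symm.trans e₁⟩

lemma HasPath.exists_injective (h : HasPath A B 1) :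
    (∃ f : A →* B, Function.Injective f) ∨ ∃ f : B →* A, Function.Injective f := by
  obtain ⟨C, ⟨e₀⟩, ⟨e₁⟩, hstep⟩ := h
  rcases hstep 0 one_pos with hemb | hemb <;> obtain ⟨f, hf⟩ := hemb.exists_injective
  · exact .inl ⟨e₁.toMonoidHom.comp (f.comp e₀.symm.toMonoidHom),
      e₁.injective.comp (hf.comp e₀.symm.injective)⟩
  · exact .inr ⟨e₀.toMonoidHom.comp (f.comp e₁.symm.toMonoidHom),
      e₀.injective.comp (hf.comp e₁.symm.injective)⟩

lemma hasPath_two_of_largeEmb {C : GrpCat.{0}} (hA : LargeEmb A C) (hB : LargeEmb B C) :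
    HasPath A B 2 := by
  refine ⟨fun | 0 => A | 1 => C | _ => B, ⟨.refl _⟩, ⟨.refl _⟩, fun i hi => ?_⟩
  interval_cases i
  exacts [.inl hA, .inr hB]

lemma dis_eq_of_hasPath {n : ℕ} (h : HasPath A B n) (hmin : ∀ m < n, ¬HasPath A B m) :
    dis A B = n := by
  refine le_antisymm (sInf_le ⟨n, rfl, h⟩) (le_sInf ?_)
  rintro _ ⟨m, rfl, hm⟩
  by_contra hlt
  exact hmin m (by exact_mod_cast not_le.mp hlt) hm

end GrpNetwork

lemma card_le_ncard_sq_eq_one_of_injective {K G : Type*} [Group K] [Group G] [Finite G]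
    (hK : ∀ k : K, k ^ 2 = 1) {f : K →* G} (hf : Function.Injective f) :
    Nat.card K ≤ {g : G | g ^ 2 = 1}.ncard := by
  rw [← Nat.card_coe_set_eq]
  exact Nat.card_le_card_of_injective (fun k => ⟨f k, by simp [← map_pow, hK]⟩)
    fun _ _ h => hf (congrArg Subtype.val h)

lemma ZMod.add_self_eq_zero_iff {n : ℕ} [NeZero n] (i : ZMod (2 * n)) :
    i + i = 0 ↔ i = 0 ∨ i = n := by
  obtain ⟨v, hv, rfl⟩ : ∃ v < 2 * n, (v : ZMod (2 * n)) = i :=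
    ⟨i.val, i.val_lt, i.natCast_zmod_val⟩
  have hn : 0 < n := Nat.pos_of_ne_zero (NeZero.ne n)
  rw [← Nat.cast_add, ← Nat.cast_zero, ZMod.natCast_eq_natCast_iff', ZMod.natCast_eq_natCast_iff',
    ZMod.natCast_eq_natCast_iff', Nat.mod_eq_of_lt hv, Nat.mod_eq_of_lt (by omega : n < 2 * n),
    Nat.zero_mod]
  constructor
  · intro h
    rcases Nat.lt_or_ge (v + v) (2 * n) with hlt | hge
    · rw [Nat.mod_eq_of_lt hlt] at h
      omega
    · rw [Nat.mod_eq_sub_mod hge, Nat.mod_eq_of_lt (by omega)] at h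
      omega
  · rintro (rfl | rfl)
    · simp
    · simp [← two_mul]

namespace QuaternionGroup

variable {n : ℕ} [NeZero n]

lemma a_ne_one : (a n : QuaternionGroup n) ≠ 1 := by
  have hn : 0 < n := Nat.pos_of_ne_zero (NeZero.ne n)
  rw [one_def, Ne, a.injEq, ZMod.natCast_eq_zero_iff]
  exact fun h => absurd (Nat.le_of_dvd hn h) (by omega)

lemma sq_eq_one_iff (x : QuaternionGroup n) : x ^ 2 = 1 ↔ x = 1 ∨ x = a n := by
  cases x with
  | a i =>
    rw [one_def, sq, a_mul_a]
    simp only [a.injEq, ZMod.add_self_eq_zero_iff]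
  | xa i =>
    rw [xa_sq, iff_false_intro a_ne_one, one_def]
    simp only [reduceCtorEq, or_self]

lemma ncard_sq_eq_one : {x : QuaternionGroup n | x ^ 2 = 1}.ncard = 2 := by
  rw [show {x : QuaternionGroup n | x ^ 2 = 1} = {1, a n} from Set.ext sq_eq_one_iff,
    Set.ncard_pair a_ne_one.symm]

end QuaternionGroup

/-- The semidihedral group `⟨r, s | r⁸ = s² = 1, srs⁻¹ = r³⟩` of order 16, with `⟨a, i⟩` standing
for `rᵃ sⁱ`. -/
@[ext] structure SemidihedralGroup16 where
  rot : ZMod 8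
  flip : ZMod 2
deriving DecidableEq, Fintype

namespace SemidihedralGroup16

instance : Mul SemidihedralGroup16 :=
  ⟨fun x y => ⟨x.rot + 3 ^ x.flip.val * y.rot, x.flip + y.flip⟩⟩
instance : One SemidihedralGroup16 := ⟨⟨0, 0⟩⟩
instance : Inv SemidihedralGroup16 := ⟨fun x => ⟨-(3 ^ x.flip.val * x.rot), x.flip⟩⟩

@[simp] lemma mul_rot (x y : SemidihedralGroup16) :
    (x * y).rot = x.rot + 3 ^ x.flip.val * y.rot := rfl
@[simp] lemma mul_flip (x y : SemidihedralGroup16) : (x * y).flip = x.flip + y.flip := rfl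
@[simp] lemma one_rot : (1 : SemidihedralGroup16).rot = 0 := rfl
@[simp] lemma one_flip : (1 : SemidihedralGroup16).flip = 0 := rfl
@[simp] lemma inv_rot (x : SemidihedralGroup16) : x⁻¹.rot = -(3 ^ x.flip.val * x.rot) := rfl
@[simp] lemma inv_flip (x : SemidihedralGroup16) : x⁻¹.flip = x.flip := rfl

lemma three_pow_val_add (i j : ZMod 2) : (3 : ZMod 8) ^ (i + j).val = 3 ^ i.val * 3 ^ j.val := by
  decide +revert

instance : Group SemidihedralGroup16 where
  mul_assoc x y z := by ext <;> simp [three_pow_val_add] <;> ring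
  one_mul x := by ext <;> simp
  mul_one x := by ext <;> simp
  inv_mul_cancel x := by ext <;> simp [ZModModule.add_self]

def r : SemidihedralGroup16 := ⟨1, 0⟩
def s : SemidihedralGroup16 := ⟨0, 1⟩

lemma eq_r_pow_mul_s_pow (x : SemidihedralGroup16) : x = r ^ x.rot.val * s ^ x.flip.val := by
  decide +revert

lemma eq_top_of_r_mem_of_s_mem {H : Subgroup SemidihedralGroup16} (hr : r ∈ H) (hs : s ∈ H) :
    H = ⊤ :=
  eq_top_iff.mpr fun x _ => eq_r_pow_mul_s_pow x ▸ mul_mem (pow_mem hr _) (pow_mem hs _)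

/-- `(x, y) ↦ r⁴ˣ sʸ`. -/
def kleinFourHom : Multiplicative (ZMod 2 × ZMod 2) →* SemidihedralGroup16 :=
  MonoidHom.mk' (fun x => ⟨4 * x.toAdd.1.val, x.toAdd.2⟩) (by decide)

lemma kleinFourHom_injective : Function.Injective kleinFourHom := by
  decide +revert

/-- `a i ↦ r²ⁱ` and `xa i ↦ (rs) r²ⁱ`. -/
def quaternionHom : QuaternionGroup 2 →* SemidihedralGroup16 :=
  MonoidHom.mk' (fun | .a i => ⟨2 * i.val, 0⟩ | .xa i => ⟨1 + 6 * i.val, 1⟩) (by decide)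

lemma quaternionHom_injective : Function.Injective quaternionHom := by
  decide +revert

lemma largeEmb_kleinFour : GrpNetwork.LargeEmb (GrpCat.of (Multiplicative (ZMod 2 × ZMod 2)))
    (GrpCat.of SemidihedralGroup16) :=
  GrpNetwork.largeEmb_of_injective kleinFourHom_injective r <|
    eq_top_of_r_mem_of_s_mem (Subgroup.subset_closure (.inr rfl))
      (Subgroup.subset_closure (.inl ⟨.ofAdd (0, 1), rfl⟩))

lemma largeEmb_quaternion :
    GrpNetwork.LargeEmb (GrpCat.of (QuaternionGroup 2)) (GrpCat.of SemidihedralGroup16) := by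
  set H := Subgroup.closure (↑quaternionHom.range ∪ {s})
  have hs : s ∈ H := Subgroup.subset_closure (.inr rfl)
  have hrs : r * s ∈ H := Subgroup.subset_closure (.inl ⟨.xa 0, rfl⟩)
  have hr : r ∈ H := (by decide : r * s * s = r) ▸ mul_mem hrs hs
  exact GrpNetwork.largeEmb_of_injective quaternionHom_injective s (eq_top_of_r_mem_of_s_mem hr hs)

end SemidihedralGroup16

/-- in the class of all groups, the generator distance between the Klein
four-group `V₄ = (ℤ/2ℤ) × (ℤ/2ℤ)` and the quaternion group `Q₈` equals 2. -/
theorem dis_klein_quaternion :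
    GrpNetwork.dis (GrpCat.of (Multiplicative (ZMod 2 × ZMod 2)))
      (GrpCat.of (QuaternionGroup 2)) = 2 := by
  refine GrpNetwork.dis_eq_of_hasPath (GrpNetwork.hasPath_two_of_largeEmb
    SemidihedralGroup16.largeEmb_kleinFour SemidihedralGroup16.largeEmb_quaternion) ?_
  have card_klein : Nat.card (Multiplicative (ZMod 2 × ZMod 2)) = 4 := IsKleinFour.card_four
  have card_quaternion : Nat.card (QuaternionGroup 2) = 8 := by
    rw [Nat.card_eq_fintype_card, QuaternionGroup.card]
  intro m hm h
  interval_cases m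
  · obtain ⟨e⟩ := h.nonempty_mulEquiv
    have : Nat.card (Multiplicative (ZMod 2 × ZMod 2)) = Nat.card (QuaternionGroup 2) :=
      Nat.card_congr e.toEquiv
    omega
  · rcases h.exists_injective with ⟨f, hf⟩ | ⟨f, hf⟩
    · have : Nat.card (Multiplicative (ZMod 2 × ZMod 2)) ≤ 2 :=
        (card_le_ncard_sq_eq_one_of_injective (fun k => (sq k).trans (IsKleinFour.mul_self k))
          hf).trans_eq QuaternionGroup.ncard_sq_eq_one
      omega
    · have : Nat.card (QuaternionGroup 2) ≤ Nat.card (Multiplicative (ZMod 2 × ZMod 2)) :=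
        Nat.card_le_card_of_injective f hf
      omega
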